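/- arXiv:1512.04748 — 4 statements merged into one kernel-verified Lean document; each statement's English description precedes it below -/
import Mathlib

section
/- The cycle C_n (n ≥ 3) can be partitioned into two total dominating sets if and only if n is divisible by 4. -/
/-!
A set `A` and its complement both totally dominate `C_n` exactly when each vertex has one
neighbour in `A` and one outside, i.e. when membership in `A` flips under `v ↦ v + 2`.
Walking around the cycle in steps of `2` returns to the start after `n` steps (`n` odd) or
`n / 2` steps (`n` even), and the number of flips must be even: so `n` is even and so is `n / 2`.
Conversely, when `4 ∣ n` the set of vertices `v` with `v mod 4 ∈ {0, 1}` works.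
-/

/-- `S` is a total dominating set of `G`. -/
def totalDom {V : Type*} (G : SimpleGraph V) (S : Set V) : Prop :=
  ∀ v : V, ∃ u ∈ S, G.Adj v u

open Function SimpleGraph

theorem Function.Antiperiodic.odd_nsmul_ne_zero {α β : Type*} [AddMonoid α] [InvolutiveNeg β]
    {f : α → β} {c : α} (hf : Antiperiodic f c) (h0 : f 0 ≠ -f 0) {k : ℕ} (hk : Odd k) :
    k • c ≠ 0 := by
  obtain ⟨j, rfl⟩ := hk
  intro hc
  apply h0
  simpa [hc] using hf.odd_nsmul_antiperiodic j 0

theorem four_dvd_of_antiperiodic_two_nsmul {α β : Type*} [AddMonoid α] [InvolutiveNeg β]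
    {f : α → β} {d : α} {n : ℕ} (hf : Antiperiodic f (2 • d)) (h0 : f 0 ≠ -f 0)
    (hn : n • d = 0) : 4 ∣ n := by
  obtain ⟨k, rfl⟩ : Even n := by
    by_contra hodd
    exact hf.odd_nsmul_ne_zero h0 (Nat.not_even_iff_odd.1 hodd)
      (by rw [nsmul_left_comm, hn, nsmul_zero])
  obtain ⟨j, rfl⟩ : Even k := by
    by_contra hodd
    exact hf.odd_nsmul_ne_zero h0 (Nat.not_even_iff_odd.1 hodd)
      (by rwa [← mul_nsmul', mul_two])
  exact ⟨j, by ring⟩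

theorem exists_partition_totalDom_iff {V : Type*} (G : SimpleGraph V) :
    (∃ A B : Set V, Disjoint A B ∧ A ∪ B = Set.univ ∧ totalDom G A ∧ totalDom G B) ↔
      ∃ A : Set V, totalDom G A ∧ totalDom G Aᶜ := by
  constructor
  · rintro ⟨A, B, hdisj, hunion, hA, hB⟩
    have hAB : IsCompl A B := ⟨hdisj, codisjoint_iff.2 hunion⟩
    exact ⟨A, hA, hAB.compl_eq ▸ hB⟩
  · rintro ⟨A, hA, hAc⟩
    exact ⟨A, Aᶜ, disjoint_compl_right, Set.union_compl_self A, hA, hAc⟩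

section Cycle

open scoped Fin.NatCast Fin.CommRing

variable {m : ℕ} {A : Set (Fin (m + 2))}

theorem totalDom_cycleGraph_iff :
    totalDom (cycleGraph (m + 2)) A ↔ ∀ v, v - 1 ∈ A ∨ v + 1 ∈ A := by
  refine forall_congr' fun v => ?_
  simp only [← mem_neighborSet, cycleGraph_neighborSet]
  aesop

theorem totalDom_cycleGraph_and_compl_iff :
    totalDom (cycleGraph (m + 2)) A ∧ totalDom (cycleGraph (m + 2)) Aᶜ ↔
      ∀ v, v + 2 ∈ A ↔ v ∉ A := by
  simp only [totalDom_cycleGraph_iff, Set.mem_compl_iff]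
  constructor
  · rintro ⟨hA, hAc⟩ v
    have h₁ := hA (v + 1)
    have h₂ := hAc (v + 1)
    rw [add_sub_cancel_right, add_assoc, one_add_one_eq_two] at h₁ h₂
    tauto
  · intro h
    have h' : ∀ v, v + 1 ∈ A ↔ v - 1 ∉ A := fun v => by
      rw [← h (v - 1), show v - 1 + 2 = v + 1 by ring]
    exact ⟨fun v => by have := h' v; tauto, fun v => by have := h' v; tauto⟩

theorem four_dvd_of_forall_add_two_mem_iff (hA : ∀ v, v + 2 ∈ A ↔ v ∉ A) : 4 ∣ m + 2 := by
  classical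
  let f : Fin (m + 2) → ℤ := fun v => if v ∈ A then 1 else -1
  refine four_dvd_of_antiperiodic_two_nsmul (f := f) (d := 1) (fun v => ?_) ?_ ?_
  · simp only [f, two_nsmul, one_add_one_eq_two, hA]
    split_ifs <;> norm_num
  · simp only [f]
    split_ifs <;> norm_num
  · simp [nsmul_eq_mul]

theorem add_two_mem_iff_not_mem_of_four_dvd (h4 : 4 ∣ m + 2) (v : Fin (m + 2)) :
    v + 2 ∈ {w : Fin (m + 2) | w.val % 4 < 2} ↔ v ∉ {w : Fin (m + 2) | w.val % 4 < 2} := by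
  obtain ⟨k, rfl⟩ : ∃ k, m = k + 1 := ⟨m - 1, by omega⟩
  simp only [Set.mem_ofPred_eq, Fin.val_add, Fin.val_two, Nat.mod_mod_of_dvd _ h4]
  omega

end Cycle

/-- `C_n` (`n ≥ 3`) can be partitioned into two total dominating sets iff `4 ∣ n`. -/
theorem stmt2 (n : ℕ) (hn : 3 ≤ n) :
    (∃ A B : Set (Fin n), Disjoint A B ∧ A ∪ B = Set.univ ∧
      totalDom (SimpleGraph.cycleGraph n) A ∧ totalDom (SimpleGraph.cycleGraph n) B) ↔
    4 ∣ n := by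
  obtain ⟨m, rfl⟩ : ∃ m, n = m + 2 := ⟨n - 2, by omega⟩
  rw [exists_partition_totalDom_iff]
  simp only [totalDom_cycleGraph_and_compl_iff]
  exact ⟨fun ⟨_, hA⟩ => four_dvd_of_forall_add_two_mem_iff hA,
    fun h4 => ⟨_, add_two_mem_iff_not_mem_of_four_dvd h4⟩⟩
end

section
/- In the Heawood graph, the complement of any total dominating set is not a total dominating set; consequently, the Heawood graph has total domatic number 1. -/
/-- `V(G)` admits a partition into `k` total dominating sets of `G`. -/
def tdFamily {V : Type*} (G : SimpleGraph V) (k : ℕ) : Prop :=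
  ∃ f : Fin k → Set V, Pairwise (Function.onFun Disjoint f) ∧
    (⋃ i, f i) = Set.univ ∧ ∀ i, totalDom G (f i)

/-- The Heawood graph: the 14-cycle together with the chords given by the LCF
notation `[5, -5]⁷`. -/
def heawood : SimpleGraph (Fin 14) :=
  SimpleGraph.fromEdgeSet
    {s(0,1), s(1,2), s(2,3), s(3,4), s(4,5), s(5,6), s(6,7), s(7,8), s(8,9),
     s(9,10), s(10,11), s(11,12), s(12,13), s(13,0),
     s(0,5), s(2,7), s(4,9), s(6,11), s(8,13), s(10,1), s(12,3)}

/-! ### Auxiliary decidability setup -/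

def edgeF : Finset (Sym2 (Fin 14)) :=
    {s(0,1), s(1,2), s(2,3), s(3,4), s(4,5), s(5,6), s(6,7), s(7,8), s(8,9),
     s(9,10), s(10,11), s(11,12), s(12,13), s(13,0),
     s(0,5), s(2,7), s(4,9), s(6,11), s(8,13), s(10,1), s(12,3)}

lemma adj_iff' (a b : Fin 14) : heawood.Adj a b ↔ (s(a,b) ∈ edgeF ∧ a ≠ b) := by
  rw [heawood, SimpleGraph.fromEdgeSet_adj]
  constructor <;> rintro ⟨h1, h2⟩ <;> refine ⟨?_, h2⟩ <;> simpa [edgeF] using h1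

instance heawoodDec : DecidableRel heawood.Adj := fun a b =>
  decidable_of_iff _ (adj_iff' a b).symm

def nbrL : List Nat := [8226, 1029, 138, 4116, 552, 81, 2208, 324, 8832, 1296, 2562, 5184, 10248, 4353]

def nbrMask : Fin 14 → Nat :=
  ![8226, 1029, 138, 4116, 552, 81, 2208, 324, 8832, 1296, 2562, 5184, 10248, 4353]

def adjB (a b : Fin 14) : Bool := (nbrMask a).testBit b.val

lemma adj_iff (a b : Fin 14) : heawood.Adj a b ↔ adjB a b = true := by
  revert a b; decide

lemma nbr_mem : ∀ v : Fin 14, nbrMask v ∈ nbrL := by decide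

lemma nbr_surj : ∀ m ∈ nbrL, ∃ v : Fin 14, nbrMask v = m := by decide

lemma full_testBit : ∀ u : Fin 14, Nat.testBit 16383 u.val = true := by decide

/-! ### The exhaustive computation -/

def domB (s : Nat) : Bool := nbrL.all fun m => m &&& s != 0
def goodB (s : Nat) : Bool := !domB s || nbrL.any fun m => m &&& (16383 ^^^ s) == 0

def allGood : Nat → Nat → Bool
  | a, 0 => goodB a
  | a, n+1 => allGood a n && allGood (a + 2^n) n

set_option maxHeartbeats 20000000 in
lemma keyB : allGood 0 14 = true := by decide

lemma allGood_spec : ∀ n a, allGood a n = true → ∀ i, i < 2^n → goodB (a + i) = true := by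
  intro n
  induction n with
  | zero =>
      intro a h i hi
      interval_cases i
      simpa [allGood] using h
  | succ n ih =>
      intro a h i hi
      rw [allGood, Bool.and_eq_true] at h
      rcases lt_or_ge i (2^n) with h1 | h1
      · exact ih a h.1 i h1
      · have := ih (a + 2^n) h.2 (i - 2^n) (by omega : i - 2^n < 2^n)
        have e : a + 2^n + (i - 2^n) = a + i := by omega
        rwa [e] at this

/-! ### Encoding a boolean function as a natural number -/

def enc (f : Nat → Bool) : Nat → Nat
  | 0 => 0
  | n+1 => Nat.bit (f 0) (enc (fun i => f (i+1)) n)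

lemma enc_lt : ∀ n (f : Nat → Bool), enc f n < 2^n := by
  intro n
  induction n with
  | zero => intro f; simp [enc]
  | succ n ih =>
      intro f
      have := ih (fun i => f (i+1))
      simp only [enc, Nat.bit, pow_succ]
      cases f 0 <;> simp <;> omega

lemma enc_testBit : ∀ n (f : Nat → Bool) (i : Nat), i < n → (enc f n).testBit i = f i := by
  intro n
  induction n with
  | zero => omega
  | succ n ih =>
      intro f i hi
      cases i with
      | zero => simp [enc, Nat.testBit_bit_zero]
      | succ i =>
          rw [enc, Nat.testBit_bit_succ, ih (fun i => f (i+1)) i (by omega)]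

/-! ### The key combinatorial lemma -/

lemma key (g : Fin 14 → Bool)
    (h : ∀ v : Fin 14, ∃ u : Fin 14, g u = true ∧ adjB v u = true) :
    ∃ v : Fin 14, ∀ u : Fin 14, adjB v u = true → g u = true := by
  set f : Nat → Bool := fun i => if h : i < 14 then g ⟨i, h⟩ else false with hf
  set s : Nat := enc f 14 with hs
  have hsbit : ∀ u : Fin 14, s.testBit u.val = g u := by
    intro u
    rw [hs, enc_testBit 14 f u.val u.isLt, hf]
    simp [u.isLt]
  have hslt : s < 2^14 := enc_lt 14 f
  have hgood : goodB s = true := by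
    have := allGood_spec 14 0 keyB s (by simpa using hslt)
    simpa using this
  have hdom : domB s = true := by
    rw [domB, List.all_eq_true]
    intro m hm
    obtain ⟨v, rfl⟩ := nbr_surj m hm
    obtain ⟨u, hgu, hadj⟩ := h v
    have hb : (nbrMask v &&& s).testBit u.val = true := by
      rw [Nat.testBit_land, show (nbrMask v).testBit u.val = true from hadj, hsbit u, hgu]
      rfl
    simp only [ne_eq, bne_iff_ne]
    intro h0
    rw [h0, Nat.zero_testBit] at hb
    exact Bool.false_ne_true hb
  rw [goodB, hdom, Bool.not_true, Bool.false_or, List.any_eq_true] at hgood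
  obtain ⟨m, hm, hz⟩ := hgood
  obtain ⟨v, rfl⟩ := nbr_surj m hm
  refine ⟨v, fun u hadj => ?_⟩
  by_contra hgu
  have hgu' : g u = false := by simpa using hgu
  have : (nbrMask v &&& (16383 ^^^ s)).testBit u.val = true := by
    rw [Nat.testBit_land, show (nbrMask v).testBit u.val = true from hadj, Nat.testBit_xor,
      full_testBit u, hsbit u, hgu']
    rfl
  rw [beq_iff_eq] at hz
  rw [hz, Nat.zero_testBit] at this
  exact Bool.false_ne_true this

lemma totalDom_mono {S T : Set (Fin 14)} (hST : S ⊆ T) (h : totalDom heawood S) :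
    totalDom heawood T := fun v => by
  obtain ⟨u, hu, ha⟩ := h v
  exact ⟨u, hST hu, ha⟩

lemma part1 : ∀ S : Set (Fin 14), totalDom heawood S → ¬ totalDom heawood Sᶜ := by
  classical
  intro S hS hC
  set g : Fin 14 → Bool := fun v => decide (v ∈ S) with hg
  have hmem : ∀ v : Fin 14, g v = true ↔ v ∈ S := by
    intro v; simp [hg]
  obtain ⟨v, hv⟩ := key g (by
    intro v
    obtain ⟨u, hu, ha⟩ := hS v
    exact ⟨u, (hmem u).2 hu, (adj_iff v u).1 ha⟩)
  obtain ⟨u, hu, ha⟩ := hC v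
  exact hu ((hmem u).1 (hv u ((adj_iff v u).1 ha)))

/-- In the Heawood graph the complement of a total dominating set is never a
total dominating set; consequently its total domatic number equals 1. -/
theorem stmt9 :
    (∀ S : Set (Fin 14), totalDom heawood S → ¬ totalDom heawood Sᶜ) ∧
    tdFamily heawood 1 ∧ (∀ k : ℕ, tdFamily heawood k → k ≤ 1) := by
  refine ⟨part1, ⟨fun _ => Set.univ, ?_, by
    rw [Set.eq_univ_iff_forall]
    exact fun x => Set.mem_iUnion.2 ⟨0, Set.mem_univ x⟩, ?_⟩, ?_⟩
  · intro i j hij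
    exact absurd (Subsingleton.elim i j) hij
  · intro _ v
    have : ∀ v : Fin 14, ∃ u : Fin 14, heawood.Adj v u := by decide
    obtain ⟨u, hu⟩ := this v
    exact ⟨u, Set.mem_univ u, hu⟩
  · rintro k ⟨f, hd, hu, ht⟩
    by_contra hk
    push_neg at hk
    have h01 : (⟨0, by omega⟩ : Fin k) ≠ ⟨1, by omega⟩ := by
      simp [Fin.ext_iff]
    have hdisj : Disjoint (f ⟨0, by omega⟩) (f ⟨1, by omega⟩) := hd h01
    have hsub : f ⟨1, by omega⟩ ⊆ (f ⟨0, by omega⟩)ᶜ := hdisj.subset_compl_left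
    exact part1 (f ⟨0, by omega⟩) (ht _) (totalDom_mono hsub (ht _))
end

section
/- Every r-regular graph with r ≥ 4 can be partitioned into two total dominating sets, assuming that every r-uniform r-regular hypergraph with r ≥ 4 is 2-colorable. -/
/-- Assuming every `r`-uniform `r`-regular hypergraph with `r ≥ 4` is
2-colorable, every `r`-regular graph with `r ≥ 4` can be partitioned into two
total dominating sets. -/
theorem stmt14 {V : Type u} [Fintype V] (G : SimpleGraph V) [DecidableRel G.Adj]
    (r : ℕ) (hr : 4 ≤ r) (hreg : G.IsRegularOfDegree r)
    (hyp : ∀ (β : Type u) [Fintype β] [DecidableEq β] (E : Multiset (Finset β)),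
      (∀ e ∈ E, e.card = r) → (∀ b : β, E.countP (fun e => b ∈ e) = r) →
      ∃ c : β → Bool, ∀ e ∈ E, (∃ x ∈ e, c x = true) ∧ (∃ x ∈ e, c x = false)) :
    ∃ A B : Set V, Disjoint A B ∧ A ∪ B = Set.univ ∧
      totalDom G A ∧ totalDom G B := by
  classical
  set E : Multiset (Finset V) := Finset.univ.val.map (fun v => G.neighborFinset v) with hE
  obtain ⟨c, hc⟩ := hyp V E
    (by
      intro e he
      simp only [hE, Multiset.mem_map] at he
      obtain ⟨v, -, rfl⟩ := he
      simpa [SimpleGraph.card_neighborFinset_eq_degree] using hreg v)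
    (by
      intro b
      rw [hE, Multiset.countP_map]
      have h1 : Multiset.filter (fun v => b ∈ G.neighborFinset v) Finset.univ.val
          = (Finset.univ.filter (fun v => b ∈ G.neighborFinset v)).val := rfl
      have h2 : Finset.univ.filter (fun v => b ∈ G.neighborFinset v)
          = G.neighborFinset b := by
        ext v
        simp [SimpleGraph.adj_comm]
      rw [h1, h2]
      simpa [SimpleGraph.card_neighborFinset_eq_degree] using hreg b)
  refine ⟨{v | c v = true}, {v | c v = false}, ?_, ?_, ?_, ?_⟩
  · rw [Set.disjoint_left]; intro a ha hb; simp_all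
  · ext v; cases h : c v <;> simp [Set.mem_union, h]
  · intro v
    obtain ⟨⟨x, hx, hcx⟩, -⟩ := hc (G.neighborFinset v) (by simp [hE])
    exact ⟨x, hcx, by simpa using hx⟩
  · intro v
    obtain ⟨-, ⟨x, hx, hcx⟩⟩ := hc (G.neighborFinset v) (by simp [hE])
    exact ⟨x, hcx, by simpa using hx⟩
end

section
/- There exist infinitely many connected cubic graphs whose total domatic number equals 1. -/
/-!
The graphs are rings of `k` copies of the Heawood graph, `k` odd, each copy with one edge
removed: line 0 of copy `c` is joined to point 0 of copy `c + 1` instead of point 0 of copy `c`.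
They are connected and cubic. A partition into two total dominating sets is a 2-colouring in
which every open neighbourhood sees both colours. Restricted to the points of one copy, such a
colouring has a monochromatic line of the Fano plane. A line other than 0 is adjacent exactly to
its own three points, so the monochromatic line is line 0, whose neighbours are points 1 and 3 of
copy `c` and point 0 of copy `c + 1`; hence the colour of point 0 flips from each copy to the
next, which is impossible around an odd ring.
-/

section TotalDomination

variable {V W : Type*} {G : SimpleGraph V} {H : SimpleGraph W}

def OpenNbhdTwoColorable (G : SimpleGraph V) : Prop :=
  ∃ col : V → Bool, ∀ v b, ∃ u, G.Adj v u ∧ col u = b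

lemma tdFamily_one_of_forall_exists_adj (h : ∀ v, ∃ u, G.Adj v u) : tdFamily G 1 :=
  ⟨fun _ => Set.univ, fun i j hij => absurd (Subsingleton.elim i j) hij, Set.iUnion_const _,
    fun _ v => (h v).imp fun _ hu => ⟨Set.mem_univ _, hu⟩⟩

lemma OpenNbhdTwoColorable.of_tdFamily {k : ℕ} (hk : 2 ≤ k) (h : tdFamily G k) :
    OpenNbhdTwoColorable G := by
  classical
  obtain ⟨f, hdisj, -, hdom⟩ := h
  let i₀ : Fin k := ⟨0, by omega⟩
  let i₁ : Fin k := ⟨1, by omega⟩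
  refine ⟨fun u => decide (u ∈ f i₀), fun v b => ?_⟩
  cases b
  · obtain ⟨u, hu, hvu⟩ := hdom i₁ v
    have hne : i₁ ≠ i₀ := fun h => by simp [i₀, i₁, Fin.ext_iff] at h
    exact ⟨u, hvu, decide_eq_false (Set.disjoint_left.mp (hdisj hne) hu)⟩
  · obtain ⟨u, hu, hvu⟩ := hdom i₀ v
    exact ⟨u, hvu, decide_eq_true hu⟩

lemma OpenNbhdTwoColorable.of_iso (e : G ≃g H) (h : OpenNbhdTwoColorable G) :
    OpenNbhdTwoColorable H := by
  obtain ⟨col, hcol⟩ := h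
  refine ⟨col ∘ e.symm, fun v b => ?_⟩
  obtain ⟨u, hvu, hu⟩ := hcol (e.symm v) b
  exact ⟨e u, by simpa using e.map_adj_iff.mpr hvu, by simpa using hu⟩

lemma SimpleGraph.Iso.ncard_neighborSet (e : G ≃g H) (v : V) :
    (H.neighborSet (e v)).ncard = (G.neighborSet v).ncard := by
  rw [← e.image_neighborSet, Set.ncard_image_of_injective _ e.injective]

end TotalDomination

lemma ZMod.reachable_add_natCast_mul {V : Type*} {G : SimpleGraph V} {k : ℕ} (f : ZMod k → V)
    {a : ZMod k} (h : ∀ x, G.Reachable (f x) (f (x + a))) (x : ZMod k) (n : ℕ) :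
    G.Reachable (f x) (f (x + n * a)) := by
  induction n with
  | zero => simp
  | succ n ih => simpa [add_mul, add_assoc] using ih.trans (h _)

lemma ZMod.exists_apply_add_one_ne_not {k : ℕ} (hk : Odd k) (f : ZMod k → Bool) :
    ∃ c, f (c + 1) ≠ !f c := by
  by_contra! h
  have parity (n : ℕ) : f n = (f 0 ^^ decide (Odd n)) := by
    induction n with
    | zero => simp
    | succ n ih =>
      rw [Nat.cast_succ, h, ih]
      cases f 0 <;> simp [← Nat.not_even_iff_odd, Nat.even_add_one]
  simpa [hk] using parity k

namespace HeawoodRing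

/- Point `p` lies on line `l` of the Fano plane iff `p - l ∈ diffSet`: `{0, 1, 3}` is a perfect
difference set modulo 7. -/
def diffSet : Finset (ZMod 7) := {0, 1, 3}

set_option maxRecDepth 4000 in
lemma exists_monochromatic_line (g : ZMod 7 → Bool) : ∃ l, ∀ d ∈ diffSet, g (l + d) = g l := by
  revert g; decide

/- Vertex `(c, x)` is element `x` of copy `c`; points are `inl`, lines `inr`. Copy `c` is the
Heawood graph with the edge between point 0 and line 0 removed, and line 0 of copy `c` is joined
to point 0 of copy `c + 1` instead, which is what `shift` records. -/
abbrev Elt (k : ℕ) := ZMod k × ZMod 7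

def shift (k : ℕ) (p l : ZMod 7) : ZMod k := if p = 0 ∧ l = 0 then 1 else 0

def Joined {k : ℕ} (x y : Elt k) : Prop := x.2 - y.2 ∈ diffSet ∧ x.1 = y.1 + shift k x.2 y.2

def graph (k : ℕ) : SimpleGraph (Elt k ⊕ Elt k) where
  Adj
    | .inl x, .inr y | .inr y, .inl x => Joined x y
    | _, _ => False
  symm := ⟨by rintro (x | x) (y | y) h <;> exact h⟩
  loopless := ⟨by rintro (x | x) h <;> exact h⟩

variable {k : ℕ}

lemma shift_eq_zero {p l : ZMod 7} (h : ¬(p = 0 ∧ l = 0)) : shift k p l = 0 := if_neg h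

lemma neighborSet_inl (x : Elt k) :
    (graph k).neighborSet (.inl x) =
      (fun d => .inr (x.1 - shift k x.2 (x.2 - d), x.2 - d)) '' diffSet := by
  ext (y | ⟨c, l⟩)
  · exact iff_of_false id (by simp)
  · constructor
    · rintro ⟨hl, hc⟩
      exact ⟨x.2 - l, hl, by simp [hc]⟩
    · rintro ⟨d, hd, h⟩
      simp only [Sum.inr.injEq, Prod.mk.injEq] at h
      obtain ⟨rfl, rfl⟩ := h
      exact ⟨by simpa using hd, by simp⟩

lemma neighborSet_inr (y : Elt k) :
    (graph k).neighborSet (.inr y) =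
      (fun d => .inl (y.1 + shift k (y.2 + d) y.2, y.2 + d)) '' diffSet := by
  ext (⟨c, p⟩ | x)
  · constructor
    · rintro ⟨hp, hc⟩
      dsimp only at hp hc
      subst hc
      exact ⟨p - y.2, hp, by simp⟩
    · rintro ⟨d, hd, h⟩
      simp only [Sum.inl.injEq, Prod.mk.injEq] at h
      obtain ⟨rfl, rfl⟩ := h
      exact ⟨by simpa using hd, rfl⟩
  · exact iff_of_false id (by simp)

lemma ncard_neighborSet (v : Elt k ⊕ Elt k) : ((graph k).neighborSet v).ncard = 3 := by
  rcases v with x | y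
  · rw [neighborSet_inl, Set.ncard_image_of_injective, Set.ncard_coe_finset]
    · rfl
    · intro d d' h
      simp only [Sum.inr.injEq, Prod.mk.injEq] at h
      exact sub_right_injective h.2
  · rw [neighborSet_inr, Set.ncard_image_of_injective, Set.ncard_coe_finset]
    · rfl
    · intro d d' h
      simp only [Sum.inl.injEq, Prod.mk.injEq] at h
      exact add_right_injective _ h.2

lemma adj_inl_inr {c : ZMod k} {p l : ZMod 7} (hpl : p - l ∈ diffSet) (h : ¬(p = 0 ∧ l = 0)) :
    (graph k).Adj (.inl (c, p)) (.inr (c, l)) :=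
  ⟨hpl, by rw [shift_eq_zero h, add_zero]⟩

lemma reachable_inl_add_two (c : ZMod k) (p : ZMod 7) :
    (graph k).Reachable (.inl (c, p)) (.inl (c, p + 2)) :=
  (adj_inl_inr (l := p - 1) (by revert p; decide) (by revert p; decide)).reachable.trans
    (adj_inl_inr (by revert p; decide) (by revert p; decide)).symm.reachable

lemma reachable_inl_inl (c : ZMod k) (p q : ZMod 7) :
    (graph k).Reachable (.inl (c, p)) (.inl (c, q)) := by
  obtain ⟨n, rfl⟩ : ∃ n : Fin 7, q = p + ((n : ℕ) : ZMod 7) * 2 := by revert p q; decide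
  exact ZMod.reachable_add_natCast_mul (fun p => (.inl (c, p) : Elt k ⊕ Elt k)) (reachable_inl_add_two c) p n

lemma reachable_inr_inl (c : ZMod k) (l : ZMod 7) :
    (graph k).Reachable (.inr (c, l)) (.inl (c, l + 1)) :=
  (adj_inl_inr (by simp [diffSet]) (by revert l; decide)).symm.reachable

lemma reachable_inl_zero_succ (c : ZMod k) :
    (graph k).Reachable (.inl (c, 0)) (.inl (c + 1, 0)) :=
  have cross : (graph k).Adj (.inr (c, 0)) (.inl (c + 1, 0)) := ⟨by simp [diffSet], by simp [shift]⟩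
  ((reachable_inl_inl c 0 1).trans (reachable_inr_inl c 0).symm).trans cross.reachable

theorem connected [NeZero k] : (graph k).Connected := by
  have hcopy (c : ZMod k) : (graph k).Reachable (.inl (0, 0)) (.inl (c, 0)) := by
    simpa using ZMod.reachable_add_natCast_mul (fun c => (.inl (c, 0) : Elt k ⊕ Elt k)) reachable_inl_zero_succ 0 c.val
  refine (SimpleGraph.connected_iff_exists_forall_reachable _).2 ⟨.inl (0, 0), ?_⟩
  rintro (⟨c, p⟩ | ⟨c, l⟩)
  · exact (hcopy c).trans (reachable_inl_inl c 0 p)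
  · exact ((hcopy c).trans (reachable_inl_inl c 0 (l + 1))).trans (reachable_inr_inl c l).symm

theorem not_openNbhdTwoColorable (hk : Odd k) : ¬ OpenNbhdTwoColorable (graph k) := by
  rintro ⟨col, hcol⟩
  obtain ⟨c, hc⟩ := ZMod.exists_apply_add_one_ne_not hk fun c => col (.inl (c, 0))
  obtain ⟨l, hl⟩ := exists_monochromatic_line fun p => col (.inl (c, p))
  obtain ⟨u, hadj, hu⟩ := hcol (.inr (c, l)) !col (.inl (c, l))
  have hu' : u ∈ (graph k).neighborSet (.inr (c, l)) := hadj
  rw [neighborSet_inr] at hu'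
  obtain ⟨d, hd, rfl⟩ := hu'
  dsimp only at hu
  by_cases h0 : l + d = 0 ∧ l = 0
  · obtain ⟨hd0, rfl⟩ := h0
    simp only [zero_add] at hd0
    subst hd0
    exact hc (by simpa [shift] using hu)
  · rw [shift_eq_zero h0, add_zero, hl d hd] at hu
    simp at hu

end HeawoodRing

/-- There are infinitely many connected cubic graphs with total domatic number
exactly 1. -/
theorem stmt16 :
    ∀ n : ℕ, ∃ m : ℕ, n ≤ m ∧ ∃ G : SimpleGraph (Fin m),
      G.Connected ∧ (∀ v, ({u | G.Adj v u}).ncard = 3) ∧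
      tdFamily G 1 ∧ ∀ k : ℕ, tdFamily G k → k ≤ 1 := by
  intro n
  have : NeZero (2 * n + 1) := ⟨by omega⟩
  let H := HeawoodRing.graph (2 * n + 1)
  let e := Fintype.equivFin (HeawoodRing.Elt (2 * n + 1) ⊕ HeawoodRing.Elt (2 * n + 1))
  let φ : H.comap e.symm ≃g H := SimpleGraph.Iso.comap e.symm H
  have hdeg (v : Fin _) : ((H.comap e.symm).neighborSet v).ncard = 3 := by
    rw [← φ.ncard_neighborSet, HeawoodRing.ncard_neighborSet]
  refine ⟨_, ?_, H.comap e.symm, φ.connected_iff.2 HeawoodRing.connected, hdeg, ?_, ?_⟩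
  · simp only [Fintype.card_sum, Fintype.card_prod, ZMod.card]
    omega
  · exact tdFamily_one_of_forall_exists_adj fun v =>
      Set.nonempty_of_ncard_ne_zero (s := (H.comap e.symm).neighborSet v) (by rw [hdeg]; decide)
  · intro k hk
    by_contra! h2
    exact HeawoodRing.not_openNbhdTwoColorable (by simp)
      ((OpenNbhdTwoColorable.of_tdFamily h2 hk).of_iso φ)
end
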